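/- arXiv:2105.13830 — 4 statements merged into one kernel-verified Lean document; each statement's English description precedes it below -/
import Mathlib

section
/- Let ψ₀(ρ) = c₀(ρ² − 2k) where c₀ = ‖ρ² − 2k‖⁻¹ in the Gaussian norm ‖f‖² = ∫₀^∞ f² e^{−ρ²/4} ρ^{k−1} dρ. Then ⟨ψ₀², ψ₀⟩ = 8 c₀. -/
open MeasureTheory Real Set

noncomputable def auxG (s : ℝ) : ℝ :=
  ∫ x in Set.Ioi (0 : ℝ), x ^ s * Real.exp (-(4 : ℝ)⁻¹ * x ^ 2)

lemma auxG_integrableOn {s : ℝ} (hs : -1 < s) :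
    IntegrableOn (fun x : ℝ => x ^ s * Real.exp (-(4 : ℝ)⁻¹ * x ^ 2)) (Set.Ioi 0) :=
  integrableOn_rpow_mul_exp_neg_mul_sq (by norm_num) hs

lemma auxG_eq {s : ℝ} (hs : -1 < s) :
    auxG s = (4 : ℝ)⁻¹ ^ (-(s + 1) / 2) * (1 / 2) * Real.Gamma ((s + 1) / 2) := by
  have h := integral_rpow_mul_exp_neg_mul_rpow (p := 2) (q := s) (b := (4 : ℝ)⁻¹)
    two_pos hs (by norm_num)
  rw [auxG, ← h]
  refine setIntegral_congr_fun measurableSet_Ioi (fun x hx => ?_)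
  rw [Real.rpow_two]

lemma auxG_pos {s : ℝ} (hs : -1 < s) : 0 < auxG s := by
  rw [auxG_eq hs]
  have h1 : (0:ℝ) < (4 : ℝ)⁻¹ ^ (-(s + 1) / 2) := Real.rpow_pos_of_pos (by norm_num) _
  have h2 : (0:ℝ) < Real.Gamma ((s + 1) / 2) :=
    Real.Gamma_pos_of_pos (by linarith)
  positivity

lemma auxG_rec {s : ℝ} (hs : -1 < s) : auxG (s + 2) = 2 * (s + 1) * auxG s := by
  rw [auxG_eq hs, auxG_eq (by linarith : (-1:ℝ) < s + 2)]
  have h1 : (s + 2 + 1) / 2 = (s + 1) / 2 + 1 := by ring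
  have h2 : Real.Gamma ((s + 1) / 2 + 1) = ((s + 1) / 2) * Real.Gamma ((s + 1) / 2) :=
    Real.Gamma_add_one (ne_of_gt (by linarith))
  have h3 : (4 : ℝ)⁻¹ ^ (-(s + 2 + 1) / 2) = (4 : ℝ)⁻¹ ^ (-(s + 1) / 2) * 4 := by
    rw [show -(s + 2 + 1) / 2 = -(s + 1) / 2 + (-1) by ring,
      Real.rpow_add (by norm_num), Real.rpow_neg_one]
    norm_num
  rw [h1, h2, h3]
  ring

lemma aux_integral_comb {μ : MeasureTheory.Measure ℝ} {a b c : ℝ} {f g h p : ℝ → ℝ}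
    (hf : MeasureTheory.Integrable f μ) (hg : MeasureTheory.Integrable g μ)
    (hh : MeasureTheory.Integrable h μ) (hp : MeasureTheory.Integrable p μ) :
    ∫ x, (f x - a * g x + b * h x - c * p x) ∂μ
      = (∫ x, f x ∂μ) - a * (∫ x, g x ∂μ) + b * (∫ x, h x ∂μ) - c * (∫ x, p x ∂μ) := by
  have h1 : MeasureTheory.Integrable (fun x => f x - a * g x) μ := hf.sub (hg.const_mul a)
  have h2 : MeasureTheory.Integrable (fun x => f x - a * g x + b * h x) μ :=
    h1.add (hh.const_mul b)
  rw [integral_sub h2 (hp.const_mul c), integral_add h1 (hh.const_mul b),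
    integral_sub hf (hg.const_mul a), integral_const_mul, integral_const_mul,
    integral_const_mul]

open MeasureTheory in
/-- With `ψ₀(ρ) = c₀(ρ² − 2k)` where `c₀ = ‖ρ² − 2k‖⁻¹` in the Gaussian norm
`‖f‖² = ∫₀^∞ f² e^{−ρ²/4} ρ^{k−1} dρ`, one has `⟨ψ₀², ψ₀⟩ = 8 c₀`. -/
theorem stmt6 (k : ℕ) (hk : 1 ≤ k) (c₀ : ℝ)
    (hc₀ : c₀ = (Real.sqrt (∫ ρ in Set.Ioi (0 : ℝ),
        (ρ ^ 2 - 2 * (k : ℝ)) ^ 2 * Real.exp (-ρ ^ 2 / 4) * ρ ^ (k - 1)))⁻¹) :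
    ∫ ρ in Set.Ioi (0 : ℝ),
        (c₀ * (ρ ^ 2 - 2 * (k : ℝ))) ^ 2 * (c₀ * (ρ ^ 2 - 2 * (k : ℝ)))
          * Real.exp (-ρ ^ 2 / 4) * ρ ^ (k - 1)
      = 8 * c₀ := by
  set K : ℝ := (k : ℝ) with hK
  have hK1 : (1 : ℝ) ≤ K := by rw [hK]; exact_mod_cast hk
  set m : ℝ := K - 1 with hmdef
  have hm : (-1 : ℝ) < m := by simp only [hmdef]; linarith
  have hm2 : (-1 : ℝ) < m + 2 := by linarith
  have hm4 : (-1 : ℝ) < m + 4 := by linarith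
  -- pointwise identities
  have hpow : ∀ x : ℝ, x ∈ Set.Ioi (0:ℝ) →
      (x : ℝ) ^ (k - 1) = x ^ m ∧ x ^ (m + 2) = x ^ 2 * x ^ m ∧
      x ^ (m + 4) = x ^ 2 * x ^ 2 * x ^ m ∧
      x ^ (m + 6) = x ^ 2 * x ^ 2 * x ^ 2 * x ^ m := by
    intro x hx
    have hx0 : (0:ℝ) < x := hx
    have h1 : (x : ℝ) ^ (k - 1) = x ^ m := by
      rw [← Real.rpow_natCast x (k - 1)]
      congr 1
      rw [Nat.cast_sub hk]
      simp [hmdef, hK]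
    have h2 : ∀ t : ℝ, x ^ (t + 2) = x ^ 2 * x ^ t := by
      intro t
      rw [Real.rpow_add hx0, Real.rpow_two]
      ring
    refine ⟨h1, h2 m, ?_, ?_⟩
    · rw [show m + 4 = (m + 2) + 2 by ring, h2, h2]; ring
    · rw [show m + 6 = ((m + 2) + 2) + 2 by ring, h2, h2, h2]; ring
  have hexp : ∀ x : ℝ, Real.exp (-x ^ 2 / 4) = Real.exp (-(4 : ℝ)⁻¹ * x ^ 2) := by
    intro x; congr 1; ring
  -- integrability
  have i0 := auxG_integrableOn hm
  have i2 := auxG_integrableOn hm2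
  have i4 := auxG_integrableOn hm4
  have i6 := auxG_integrableOn (show (-1:ℝ) < m + 6 by linarith)
  -- recurrences
  have e2 : auxG (m + 2) = 2 * K * auxG m := by
    have := auxG_rec hm; rw [this, hmdef]; ring
  have e4 : auxG (m + 4) = 2 * (K + 2) * auxG (m + 2) := by
    have := auxG_rec hm2
    rw [show m + 4 = (m + 2) + 2 by ring, this, hmdef]; ring
  have e6 : auxG (m + 6) = 2 * (K + 4) * auxG (m + 4) := by
    have := auxG_rec hm4
    rw [show m + 6 = (m + 4) + 2 by ring, this, hmdef]; ring
  -- the normalization integral equals 8 K * auxG m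
  have hN : (∫ ρ in Set.Ioi (0 : ℝ),
      (ρ ^ 2 - 2 * (k : ℝ)) ^ 2 * Real.exp (-ρ ^ 2 / 4) * ρ ^ (k - 1))
      = 8 * K * auxG m := by
    have hcong : ∀ x ∈ Set.Ioi (0:ℝ),
        (x ^ 2 - 2 * (k : ℝ)) ^ 2 * Real.exp (-x ^ 2 / 4) * x ^ (k - 1)
        = x ^ (m + 4) * Real.exp (-(4 : ℝ)⁻¹ * x ^ 2)
          - (4 * K) * (x ^ (m + 2) * Real.exp (-(4 : ℝ)⁻¹ * x ^ 2))
          + (4 * K ^ 2) * (x ^ m * Real.exp (-(4 : ℝ)⁻¹ * x ^ 2))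
          - 0 * (x ^ m * Real.exp (-(4 : ℝ)⁻¹ * x ^ 2)) := by
      intro x hx
      obtain ⟨h1, h2, h4, -⟩ := hpow x hx
      rw [hexp, h1, h2, h4]
      ring
    rw [setIntegral_congr_fun measurableSet_Ioi hcong, aux_integral_comb i4 i2 i0 i0]
    show auxG (m + 4) - 4 * K * auxG (m + 2) + 4 * K ^ 2 * auxG m - 0 * auxG m
      = 8 * K * auxG m
    rw [e4, e2]; ring
  -- value of c₀²
  have hGpos := auxG_pos hm
  have hNpos : (0:ℝ) < 8 * K * auxG m := by positivity
  have hc₀sq : c₀ ^ 2 = (8 * K * auxG m)⁻¹ := by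
    rw [hc₀, hN, ← Real.sqrt_inv, Real.sq_sqrt (by positivity)]
  -- main integral
  have hcong : ∀ x ∈ Set.Ioi (0:ℝ),
      (c₀ * (x ^ 2 - 2 * (k : ℝ))) ^ 2 * (c₀ * (x ^ 2 - 2 * (k : ℝ)))
        * Real.exp (-x ^ 2 / 4) * x ^ (k - 1)
      = c₀ ^ 3 * (x ^ (m + 6) * Real.exp (-(4 : ℝ)⁻¹ * x ^ 2)
          - (6 * K) * (x ^ (m + 4) * Real.exp (-(4 : ℝ)⁻¹ * x ^ 2))
          + (12 * K ^ 2) * (x ^ (m + 2) * Real.exp (-(4 : ℝ)⁻¹ * x ^ 2))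
          - (8 * K ^ 3) * (x ^ m * Real.exp (-(4 : ℝ)⁻¹ * x ^ 2))) := by
    intro x hx
    obtain ⟨h1, h2, h4, h6⟩ := hpow x hx
    rw [hexp, h1, h2, h4, h6]
    ring
  rw [setIntegral_congr_fun measurableSet_Ioi hcong, integral_const_mul,
    aux_integral_comb i6 i4 i2 i0]
  show c₀ ^ 3 * (auxG (m + 6) - 6 * K * auxG (m + 4) + 12 * K ^ 2 * auxG (m + 2)
      - 8 * K ^ 3 * auxG m) = 8 * c₀
  rw [e6, e4, e2]
  have hstep : c₀ ^ 3 * (2 * (K + 4) * (2 * (K + 2) * (2 * K * auxG m))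
      - 6 * K * (2 * (K + 2) * (2 * K * auxG m)) + 12 * K ^ 2 * (2 * K * auxG m)
      - 8 * K ^ 3 * auxG m) = c₀ * (c₀ ^ 2 * (64 * K * auxG m)) := by ring
  rw [hstep, hc₀sq]
  field_simp
  ring
end

section
/- Let c > 0 and let α : (−∞, T] → ℝ be differentiable with α(τ) < 0 for all τ, α(τ) → 0 as τ → −∞, and suppose α satisfies α'(τ) = −c α(τ)² + E(τ) where |E(τ)| ≤ ε(τ) α(τ)² with ε(τ) → 0 as τ → −∞. Then α(τ) = −1/(c|τ|) + o(1/|τ|) as τ → −∞. -/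
/-!
Substituting `γ τ = -1/α τ + c τ` linearises the Riccati equation: `γ' = E / α²`, which is
bounded by `ε → 0`. A function whose derivative tends to `0` at `−∞` is `o(τ)` there, so
`-1/(τ α τ) = γ τ / τ - c → -c`, i.e. `τ α τ → 1/c`, which is the claimed expansion.
-/

open Filter Topology Asymptotics

theorem isLittleO_id_atBot_of_hasDerivAt {E : Type*} [NormedAddCommGroup E] [NormedSpace ℝ E]
    {f f' : ℝ → E} {T : ℝ} (hf : ∀ x ≤ T, HasDerivAt f (f' x) x)
    (hf' : Tendsto f' atBot (𝓝 0)) : f =o[atBot] id := by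
  refine isLittleO_iff.2 fun δ hδ => ?_
  obtain ⟨T₁, hT₁⟩ := eventually_atBot.1 <|
    (((tendsto_zero_iff_norm_tendsto_zero.1 hf').eventually (ge_mem_nhds (half_pos hδ))).and
      ((eventually_le_atBot T).and (eventually_le_atBot 0)))
  have hmvt : ∀ x ≤ T₁, ‖f x - f T₁‖ ≤ δ / 2 * ‖x - T₁‖ := fun x hx =>
    (convex_Iic T₁).norm_image_sub_le_of_norm_hasDerivWithin_le
      (fun y hy => (hf y (hT₁ y hy).2.1).hasDerivWithinAt) (fun y hy => (hT₁ y hy).1)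
      Set.self_mem_Iic hx
  filter_upwards [eventually_le_atBot T₁,
    tendsto_abs_atBot_atTop.eventually_ge_atTop (‖f T₁‖ / (δ / 2))] with x hx hfT₁
  have hT₁0 : T₁ ≤ 0 := (hT₁ T₁ le_rfl).2.2
  have hdist : ‖x - T₁‖ ≤ ‖id x‖ := by
    simp only [Real.norm_eq_abs, id, abs_of_nonpos (sub_nonpos.2 hx), abs_of_nonpos (hx.trans hT₁0)]
    linarith
  rw [div_le_iff₀ (half_pos hδ)] at hfT₁
  calc ‖f x‖ ≤ ‖f T₁‖ + ‖f x - f T₁‖ := norm_le_norm_add_norm_sub' _ _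
    _ ≤ δ / 2 * ‖id x‖ + δ / 2 * ‖id x‖ := by
      gcongr
      · simpa [mul_comm] using hfT₁
      · exact (hmvt x hx).trans (by gcongr)
    _ = δ * ‖id x‖ := by ring

theorem HasDerivAt.neg_inv_add_const_mul {α : ℝ → ℝ} {c e τ : ℝ}
    (hα : HasDerivAt α (-c * α τ ^ 2 + e) τ) (hατ : α τ ≠ 0) :
    HasDerivAt (fun t => -(α t)⁻¹ + c * t) (e / α τ ^ 2) τ := by
  refine ((hα.inv hατ).neg.add ((hasDerivAt_id τ).const_mul c)).congr_deriv ?_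
  field_simp
  ring

theorem stmt7_general (c T : ℝ) (hc : 0 < c) (α E ε : ℝ → ℝ)
    (hneg : ∀ τ ≤ T, α τ < 0)
    (hode : ∀ τ ≤ T, HasDerivAt α (-c * (α τ) ^ 2 + E τ) τ)
    (hE : ∀ τ ≤ T, |E τ| ≤ ε τ * (α τ) ^ 2)
    (hε : Filter.Tendsto ε Filter.atBot (nhds 0)) :
    Filter.Tendsto (fun τ => |τ| * (α τ + 1 / (c * |τ|))) Filter.atBot (nhds 0) := by
  set γ : ℝ → ℝ := fun t => -(α t)⁻¹ + c * t
  have hγ : ∀ τ ≤ T, HasDerivAt γ (E τ / α τ ^ 2) τ := fun τ hτ =>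
    (hode τ hτ).neg_inv_add_const_mul (hneg τ hτ).ne
  have hγ' : Tendsto (fun τ => E τ / α τ ^ 2) atBot (𝓝 0) := by
    refine squeeze_zero_norm' ?_ hε
    filter_upwards [eventually_le_atBot T] with τ hτ
    simp only [norm_div, norm_pow, Real.norm_eq_abs, sq_abs]
    rw [div_le_iff₀ (sq_pos_of_neg (hneg τ hτ))]
    exact hE τ hτ
  have hγτ := (isLittleO_id_atBot_of_hasDerivAt hγ hγ').tendsto_div_nhds_zero
  -- `c - γ τ / τ = (τ α τ)⁻¹`, and the target equals `1/c - τ α τ` for `τ < 0`.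
  have hexp := tendsto_const_nhds (x := 1 / c) |>.sub
    ((tendsto_const_nhds (x := c)).sub hγτ |>.inv₀ (by simpa using hc.ne'))
  rw [sub_zero, one_div, sub_self] at hexp
  refine hexp.congr' ?_
  filter_upwards [eventually_le_atBot T, eventually_lt_atBot 0] with τ hτT hτ0
  have := (hneg τ hτT).ne
  have := hτ0.ne
  simp only [γ, id, abs_of_neg hτ0]
  field_simp
  ring

/-- ODE asymptotics for the expansion coefficient: if `α < 0`, `α → 0` at `−∞`, and
`α' = −c α² + E` with `|E| ≤ ε α²` and `ε → 0` at `−∞`, then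
`α(τ) = −1/(c|τ|) + o(1/|τ|)` as `τ → −∞`. -/
theorem stmt7 (c T : ℝ) (hc : 0 < c) (α E ε : ℝ → ℝ)
    (hneg : ∀ τ ≤ T, α τ < 0)
    (hlim : Filter.Tendsto α Filter.atBot (nhds 0))
    (hode : ∀ τ ≤ T, HasDerivAt α (-c * (α τ) ^ 2 + E τ) τ)
    (hE : ∀ τ ≤ T, |E τ| ≤ ε τ * (α τ) ^ 2)
    (hε : Filter.Tendsto ε Filter.atBot (nhds 0)) :
    Filter.Tendsto (fun τ => |τ| * (α τ + 1 / (c * |τ|))) Filter.atBot (nhds 0) :=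
  stmt7_general c T hc α E ε hneg hode hE hε
end

section
/- Let u : [0, ∞) × (−∞, T) → ℝ be positive, concave and nonincreasing in ρ (u_ρ ≤ 0, u_{ρρ} ≤ 0), and satisfy u_τ = u_{ρρ}/(1+u_ρ²) + ((k−1)/ρ) u_ρ − (ρ/2) u_ρ − (n−k)/u + u/2. Then w := u² − 2(n−k) satisfies the differential inequality w_τ ≤ w − (ρ/2) w_ρ. -/
/-- If `u > 0` is concave and nonincreasing in `ρ` and solves the renormalized profile
equation `u_τ = u_{ρρ}/(1+u_ρ²) + ((k−1)/ρ) u_ρ − (ρ/2) u_ρ − (n−k)/u + u/2`, then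
`w := u² − 2(n−k)` satisfies `w_τ ≤ w − (ρ/2) w_ρ` (here `w_τ = 2 u u_τ`, `w_ρ = 2 u u_ρ`). -/
theorem stmt8 (n k : ℕ) (hk : 1 ≤ k) (hkn : k + 1 ≤ n) (T : ℝ)
    (u uρ uρρ uτ : ℝ → ℝ → ℝ)
    (hpos : ∀ ρ t, 0 ≤ ρ → t < T → 0 < u ρ t)
    (hderivρ : ∀ ρ t, 0 ≤ ρ → t < T → HasDerivAt (fun r => u r t) (uρ ρ t) ρ)
    (hderivρρ : ∀ ρ t, 0 ≤ ρ → t < T → HasDerivAt (fun r => uρ r t) (uρρ ρ t) ρ)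
    (hderivτ : ∀ ρ t, 0 ≤ ρ → t < T → HasDerivAt (fun s => u ρ s) (uτ ρ t) t)
    (hmono : ∀ ρ t, 0 ≤ ρ → t < T → uρ ρ t ≤ 0)
    (hconc : ∀ ρ t, 0 ≤ ρ → t < T → uρρ ρ t ≤ 0)
    (hpde : ∀ ρ t, 0 < ρ → t < T →
        uτ ρ t = uρρ ρ t / (1 + (uρ ρ t) ^ 2) + (((k : ℝ) - 1) / ρ) * uρ ρ t
          - (ρ / 2) * uρ ρ t - ((n : ℝ) - k) / u ρ t + u ρ t / 2) :
    ∀ ρ t, 0 < ρ → t < T →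
      2 * u ρ t * uτ ρ t
        ≤ ((u ρ t) ^ 2 - 2 * ((n : ℝ) - k)) - (ρ / 2) * (2 * u ρ t * uρ ρ t) := by
  intro ρ t hρ ht
  have hu := hpos ρ t hρ.le ht
  have hm := hmono ρ t hρ.le ht
  have hc := hconc ρ t hρ.le ht
  have hp := hpde ρ t hρ ht
  have hk1 : (1:ℝ) ≤ (k:ℝ) := by exact_mod_cast hk
  have h1 : 1 + (uρ ρ t)^2 > 0 := by positivity
  have h2 : uρρ ρ t / (1 + (uρ ρ t)^2) ≤ 0 := div_nonpos_of_nonpos_of_nonneg hc h1.le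
  have h3 : (((k : ℝ) - 1) / ρ) * uρ ρ t ≤ 0 :=
    mul_nonpos_of_nonneg_of_nonpos (div_nonneg (by linarith) hρ.le) hm
  have h4 : ((n : ℝ) - k) / u ρ t * u ρ t = (n : ℝ) - k :=
    div_mul_cancel₀ _ hu.ne'
  rw [hp]
  nlinarith [mul_nonpos_of_nonneg_of_nonpos (by linarith : (0:ℝ) ≤ 2 * u ρ t) h2,
    mul_nonpos_of_nonneg_of_nonpos (by linarith : (0:ℝ) ≤ 2 * u ρ t) h3]
end

section
/- Let Q : (0, r₀) → ℝ be smooth with Q = U² for a positive function U with U_r ≤ 0 and U U_{rr} < 0 (strict concavity), and suppose at a point r* ∈ (0, r₀) the function Q_{rr} attains a positive value with Q_{rrr}(r*) = 0, Q_{rrrr}(r*) ≤ 0. Then the quantity Q_{rrrr}/(1+U_r²) − (1/(2Q))(2+Q_{rr})(Q_{rr} − 2U_r²)·((1−3U_r²)Q_{rr} − 8U_r²)/(1+U_r²)³ + (2(k−1)/r³)(Q_r − r Q_{rr}) evaluated at r* is strictly negative. -/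
/-- The sign computation in the proof of the quadratic concavity estimate: at a positive
interior maximum of `Q_rr` (with `Q = U²`, `U > 0`, `U_r ≤ 0`, `U U_rr < 0`,
`Q_rrr = 0`, `Q_rrrr ≤ 0`), the displayed quantity is strictly negative. -/
theorem stmt10 (k : ℕ) (hk : 1 ≤ k) (r₀ : ℝ) (U : ℝ → ℝ)
    (hU : ContDiffOn ℝ (⊤ : ℕ∞) U (Set.Ioo 0 r₀))
    (r : ℝ) (hr : r ∈ Set.Ioo 0 r₀)
    (hUpos : 0 < U r) (hUr : deriv U r ≤ 0)
    (hconc : U r * deriv (deriv U) r < 0)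
    (Q : ℝ → ℝ) (hQ : ∀ x, Q x = (U x) ^ 2)
    (hQrrpos : 0 < deriv (deriv Q) r)
    (hQrrr : deriv (deriv (deriv Q)) r = 0)
    (hQrrrr : deriv (deriv (deriv (deriv Q))) r ≤ 0) :
    deriv (deriv (deriv (deriv Q))) r / (1 + (deriv U r) ^ 2)
      - (1 / (2 * Q r)) * (2 + deriv (deriv Q) r) * (deriv (deriv Q) r - 2 * (deriv U r) ^ 2)
          * ((1 - 3 * (deriv U r) ^ 2) * deriv (deriv Q) r - 8 * (deriv U r) ^ 2)
          / (1 + (deriv U r) ^ 2) ^ 3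
      + (2 * ((k : ℝ) - 1) / r ^ 3) * (deriv Q r - r * deriv (deriv Q) r) < 0 := by
  have hQfun : Q = fun x => U x ^ 2 := funext hQ
  have hO : IsOpen (Set.Ioo (0:ℝ) r₀) := isOpen_Ioo
  have hmem : Set.Ioo (0:ℝ) r₀ ∈ nhds r := hO.mem_nhds hr
  have hU1 : ContDiffOn ℝ (⊤ : ℕ∞) (deriv U) (Set.Ioo 0 r₀) :=
    hU.deriv_of_isOpen hO (m := (⊤ : ℕ∞)) (by simp)
  have hUdR : DifferentiableAt ℝ U r := (hU.contDiffAt hmem).differentiableAt (by simp)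
  have hU'dR : DifferentiableAt ℝ (deriv U) r := (hU1.contDiffAt hmem).differentiableAt (by simp)
  -- first derivative of Q near r
  have hQd : deriv Q =ᶠ[nhds r] fun x => 2 * U x * deriv U x := by
    filter_upwards [hmem] with x hx
    have hx' : DifferentiableAt ℝ U x := (hU.contDiffAt (hO.mem_nhds hx)).differentiableAt (by simp)
    have h : HasDerivAt (fun x => U x ^ 2) _ x := (hx'.hasDerivAt.pow 2)
    rw [hQfun, h.deriv]
    ring
  have hQr : deriv Q r = 2 * U r * deriv U r := hQd.self_of_nhds
  -- second derivative of Q at r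
  have hQrr : deriv (deriv Q) r = 2 * deriv U r * deriv U r + 2 * U r * deriv (deriv U) r := by
    rw [hQd.deriv_eq]
    have h1 : HasDerivAt (fun x => 2 * U x) (2 * deriv U r) r := by
      simpa using (hUdR.hasDerivAt.const_mul 2)
    have h : HasDerivAt (fun x => 2 * U x * deriv U x) _ r := h1.mul hU'dR.hasDerivAt
    rw [h.deriv]
  -- key sign facts
  set p := deriv U r ^ 2 with hp
  set b := deriv (deriv Q) r with hb
  have hQpos : 0 < Q r := by rw [hQ r]; positivity
  have hQrle : deriv Q r ≤ 0 := by
    rw [hQr]; nlinarith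
  have hb2p : b - 2 * p < 0 := by
    have : b - 2 * p = 2 * (U r * deriv (deriv U) r) := by
      rw [hQrr, hp]; ring
    linarith
  have hppos : 0 < p := by nlinarith
  have hneg2 : (1 - 3 * p) * b - 8 * p < 0 := by nlinarith [mul_pos hppos hQrrpos]
  have hinv : 0 < 1 / (2 * Q r) := by positivity
  have hc : (0:ℝ) < 1 + p := by linarith
  -- term 2 (the subtracted one) is strictly positive
  have hT2 : 0 < (1 / (2 * Q r)) * (2 + b) * (b - 2 * p)
      * ((1 - 3 * p) * b - 8 * p) / (1 + p) ^ 3 := by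
    apply div_pos _ (by positivity)
    have h2b : (0:ℝ) < 2 + b := by linarith
    have hprod : 0 < (b - 2 * p) * ((1 - 3 * p) * b - 8 * p) :=
      mul_pos_of_neg_of_neg hb2p hneg2
    calc (0:ℝ) < (1 / (2 * Q r) * (2 + b)) * ((b - 2 * p) * ((1 - 3 * p) * b - 8 * p)) :=
          mul_pos (mul_pos hinv h2b) hprod
      _ = 1 / (2 * Q r) * (2 + b) * (b - 2 * p) * ((1 - 3 * p) * b - 8 * p) := by ring
  -- term 1 nonpositive
  have hT1 : deriv (deriv (deriv (deriv Q))) r / (1 + p) ≤ 0 :=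
    div_nonpos_of_nonpos_of_nonneg hQrrrr (le_of_lt hc)
  -- term 3 nonpositive
  have hrpos : 0 < r := hr.1
  have hT3 : (2 * ((k : ℝ) - 1) / r ^ 3) * (deriv Q r - r * b) ≤ 0 := by
    apply mul_nonpos_of_nonneg_of_nonpos
    · apply div_nonneg _ (by positivity)
      have : (1:ℝ) ≤ (k:ℝ) := by exact_mod_cast hk
      linarith
    · nlinarith
  linarith
end
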